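/- arXiv:0806.1364 — 2 statements merged into one kernel-verified Lean document; each statement's English description precedes it below -/
import Mathlib

section
/- Let K be an algebraically closed field with a nontrivial non-archimedean absolute value, and let Φ : K^{N+1} → K^{N+1} be a homogeneous polynomial map of degree d ≥ 2 with coefficients in K° satisfying ‖Φ(x)‖ ≥ C_1‖x‖^d for some C_1 > 0 and all x. If the filled Julia set F_Φ equals the closed unit ball B(0,1), then ‖Φ(x)‖ = ‖x‖^d for all x ∈ K^{N+1}. -/
/-!
Integrality of the coefficients and the ultrametric inequality give `‖Φ x‖ ≤ ‖x‖ ^ d`, so every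
point whose image lies in the unit ball has a bounded orbit. If `‖Φ x‖ < ‖x‖ ^ d` for some `x`,
rescaling `x` by a suitable `d`-th root (which exists since `K` is algebraically closed) yields a
point `y` with `‖y‖ > 1` and `‖Φ y‖ ≤ 1`; it lies in the filled Julia set but not in the unit ball.
-/

open MvPolynomial

namespace MvPolynomial.IsHomogeneous

variable {σ K : Type*} [Fintype σ] {d : ℕ}

lemma sum_eq_of_mem_support [CommSemiring K] {p : MvPolynomial σ K} (hp : p.IsHomogeneous d)
    {m : σ →₀ ℕ} (hm : m ∈ p.support) : ∑ i, m i = d := by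
  rw [← Finsupp.degree_eq_sum, Finsupp.degree_eq_weight_one]
  exact hp (mem_support_iff.mp hm)

theorem eval_smul [CommSemiring K] {p : MvPolynomial σ K} (hp : p.IsHomogeneous d) (c : K)
    (x : σ → K) : eval (c • x) p = c ^ d * eval x p := by
  rw [eval_eq', eval_eq', Finset.mul_sum]
  refine Finset.sum_congr rfl fun m hm => ?_
  simp only [Pi.smul_apply, smul_eq_mul, mul_pow, Finset.prod_mul_distrib,
    Finset.prod_pow_eq_pow_sum, hp.sum_eq_of_mem_support hm]
  ring

theorem norm_eval_le [NormedField K] [IsUltrametricDist K] {p : MvPolynomial σ K}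
    (hp : p.IsHomogeneous d) (hcoeff : ∀ m, ‖p.coeff m‖ ≤ 1) (x : σ → K) :
    ‖eval x p‖ ≤ ‖x‖ ^ d := by
  rw [eval_eq']
  refine IsUltrametricDist.norm_sum_le_of_forall_le_of_nonneg (by positivity) fun m hm => ?_
  calc ‖p.coeff m * ∏ i, x i ^ m i‖ ≤ 1 * ∏ i, ‖x‖ ^ m i := by
        rw [norm_mul, norm_prod]
        gcongr with i
        · exact hcoeff m
        · rw [norm_pow]
          exact pow_le_pow_left₀ (norm_nonneg _) (norm_le_pi_norm x i) _
    _ = ‖x‖ ^ d := by rw [one_mul, Finset.prod_pow_eq_pow_sum, hp.sum_eq_of_mem_support hm]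

end MvPolynomial.IsHomogeneous

lemma exists_norm_apply_eq_norm {ι E : Type*} [Fintype ι] [Nonempty ι] [SeminormedAddGroup E]
    (x : ι → E) : ∃ i, ‖x i‖ = ‖x‖ := by
  obtain ⟨i, -, hi⟩ := Finset.exists_mem_eq_sup Finset.univ Finset.univ_nonempty (‖x ·‖₊)
  exact ⟨i, by rw [Pi.norm_def, hi]; rfl⟩

lemma norm_iterate_le_one {E : Type*} [SeminormedAddGroup E] {F : E → E} {d : ℕ}
    (hle : ∀ z, ‖F z‖ ≤ ‖z‖ ^ d) {y : E} (hy : ‖y‖ ≤ 1) : ∀ n, ‖F^[n] y‖ ≤ 1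
  | 0 => hy
  | n + 1 => by
    rw [Function.iterate_succ_apply']
    exact (hle _).trans (pow_le_one₀ (norm_nonneg _) (norm_iterate_le_one hle hy n))

theorem exists_one_lt_norm_of_norm_lt_pow {ι K : Type*} [Fintype ι] [Nonempty ι]
    [NontriviallyNormedField K] [IsAlgClosed K] {F : (ι → K) → ι → K} {d : ℕ} (hd : d ≠ 0)
    (hsmul : ∀ (c : K) x, F (c • x) = c ^ d • F x) {x : ι → K} (hx : ‖F x‖ < ‖x‖ ^ d) :
    ∃ y, 1 < ‖y‖ ∧ ‖F y‖ ≤ 1 := by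
  have hx0 : 0 < ‖x‖ := by
    refine (norm_nonneg x).lt_of_ne fun h => ?_
    rw [← h, zero_pow hd] at hx
    exact (norm_nonneg _).not_gt hx
  -- `‖F x‖` is the norm of a coordinate, hence of an element of `K`.
  obtain ⟨a, hxa, haF⟩ : ∃ a : K, ‖x‖⁻¹ ^ d < ‖a‖ ∧ ‖a‖ * ‖F x‖ ≤ 1 := by
    rcases eq_or_ne (F x) 0 with hF0 | hF0
    · obtain ⟨a, ha⟩ := NormedField.exists_lt_norm K (‖x‖⁻¹ ^ d)
      exact ⟨a, ha, by simp [hF0]⟩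
    · obtain ⟨i, hi⟩ := exists_norm_apply_eq_norm (F x)
      have hFpos : 0 < ‖F x‖ := norm_pos_iff.mpr hF0
      refine ⟨(F x i)⁻¹, ?_, ?_⟩
      · rwa [norm_inv, hi, inv_pow, inv_lt_inv₀ (by positivity) hFpos]
      · rw [norm_inv, hi, inv_mul_cancel₀ hFpos.ne']
  obtain ⟨c, rfl⟩ := IsAlgClosed.exists_pow_nat_eq a (Nat.pos_of_ne_zero hd)
  have hc : ‖x‖⁻¹ < ‖c‖ :=
    lt_of_pow_lt_pow_left₀ d (norm_nonneg c) (by rwa [norm_pow] at hxa)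
  refine ⟨c • x, ?_, ?_⟩
  · calc 1 = ‖x‖⁻¹ * ‖x‖ := (inv_mul_cancel₀ hx0.ne').symm
      _ < ‖c‖ * ‖x‖ := mul_lt_mul_of_pos_right hc hx0
      _ = ‖c • x‖ := (norm_smul c x).symm
  · rwa [hsmul, norm_smul]

theorem stmt_9_general {K : Type*} [NontriviallyNormedField K] [IsUltrametricDist K] [IsAlgClosed K]
    {N d : ℕ} (hd : 2 ≤ d)
    (Φ : Fin (N + 1) → MvPolynomial (Fin (N + 1)) K)
    (F : (Fin (N + 1) → K) → (Fin (N + 1) → K))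
    (hF : ∀ x i, F x i = eval x (Φ i))
    (hhom : ∀ i, (Φ i).IsHomogeneous d)
    (hcoeff : ∀ i m, ‖(Φ i).coeff m‖ ≤ 1)
    (hJulia : {x : Fin (N + 1) → K | ∃ B : ℝ, ∀ ℓ : ℕ, 1 ≤ ℓ → ‖F^[ℓ] x‖ ≤ B}
      = {x : Fin (N + 1) → K | ‖x‖ ≤ 1}) :
    ∀ x, ‖F x‖ = ‖x‖ ^ d := by
  have hle : ∀ z, ‖F z‖ ≤ ‖z‖ ^ d := fun z =>
    (pi_norm_le_iff_of_nonneg (by positivity)).mpr fun i =>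
      hF z i ▸ IsHomogeneous.norm_eval_le (hhom i) (hcoeff i) z
  have hsmul : ∀ (c : K) z, F (c • z) = c ^ d • F z := fun c z => funext fun i => by
    simp only [hF, Pi.smul_apply, smul_eq_mul, IsHomogeneous.eval_smul (hhom i)]
  intro x
  refine (hle x).antisymm (not_lt.mp fun hlt => ?_)
  obtain ⟨y, hy, hFy⟩ := exists_one_lt_norm_of_norm_lt_pow (by omega) hsmul hlt
  have hbounded : y ∈ {x : Fin (N + 1) → K | ∃ B : ℝ, ∀ ℓ : ℕ, 1 ≤ ℓ → ‖F^[ℓ] x‖ ≤ B} := by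
    refine ⟨1, fun ℓ hℓ => ?_⟩
    obtain ⟨n, rfl⟩ := Nat.exists_eq_add_of_le' hℓ
    rw [Function.iterate_succ_apply]
    exact norm_iterate_le_one hle hFy n
  rw [hJulia] at hbounded
  exact hy.not_ge hbounded

/-- Let `K` be an algebraically closed field with a nontrivial non-archimedean absolute value,
and let `Φ : K^{N+1} → K^{N+1}` be given by `N+1` homogeneous forms of degree `d ≥ 2` with
coefficients in the valuation ring `K°` (all coefficient norms `≤ 1`), satisfying
`‖Φ(x)‖ ≥ C₁‖x‖^d` for some `C₁ > 0`.  If the homogeneous filled Julia set `F_Φ` equals the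
closed unit ball `B(0,1)`, then `‖Φ(x)‖ = ‖x‖^d` for all `x`. -/
theorem stmt_9 {K : Type*} [NontriviallyNormedField K] [IsUltrametricDist K] [IsAlgClosed K]
    {N d : ℕ} (hd : 2 ≤ d)
    (Φ : Fin (N + 1) → MvPolynomial (Fin (N + 1)) K)
    (F : (Fin (N + 1) → K) → (Fin (N + 1) → K))
    (hF : ∀ x i, F x i = eval x (Φ i))
    (hhom : ∀ i, (Φ i).IsHomogeneous d)
    (hcoeff : ∀ i m, ‖(Φ i).coeff m‖ ≤ 1)
    (C₁ : ℝ) (hC₁ : 0 < C₁)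
    (hlow : ∀ x, C₁ * ‖x‖ ^ d ≤ ‖F x‖)
    (hJulia : {x : Fin (N + 1) → K | ∃ B : ℝ, ∀ ℓ : ℕ, 1 ≤ ℓ → ‖F^[ℓ] x‖ ≤ B}
      = {x : Fin (N + 1) → K | ‖x‖ ≤ 1}) :
    ∀ x, ‖F x‖ = ‖x‖ ^ d :=
  stmt_9_general hd Φ F hF hhom hcoeff hJulia
end

section
/- Let K be a field with a non-archimedean absolute value, E an infinite bounded subset of K^{N+1}, and Γ ∈ GL_{N+1}(K). Then the homogeneous transfinite diameter satisfies d_∞(Γ(E)) = |det(Γ)| · d_∞(E). -/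
/-!
A linear change of coordinates `Γ` multiplies each of the `binom(M, N+1)` determinants entering
`Δ(S)` by `det Γ`, so `Δ(Γ(S)) = ±(det Γ)^binom(M, N+1) Δ(S)`. Taking the `binom(M, N+1)`-th root
and the supremum over `S`, `d_M(Γ(E)) = |det Γ| d_M(E)` for every `M ≥ N + 1`, and the limit
follows.
-/

open scoped Classical in
/-- `Δ(s)` for a tuple `s` of `M` vectors in `K^{N+1}`: the product, over all
`(N+1)`-element subsets of the tuple (enumerated by strictly monotone index maps),
of the absolute value of the determinant of the matrix whose columns are these vectors.
(Taking absolute values makes the sign ambiguity irrelevant.) -/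
noncomputable def absVandermonde {K : Type*} [NormedField K] {N M : ℕ}
    (s : Fin M → (Fin (N + 1) → K)) : ℝ :=
  ∏ t ∈ Finset.univ.filter (fun t : Fin (N + 1) → Fin M => StrictMono t),
    ‖(Matrix.of fun i j => s (t j) i).det‖

/-- The `M`-diameter `d_M(E)` of a set `E ⊆ K^{N+1}`: the supremum of
`|Δ(S)|^(1/binom(M,N+1))` over all `M`-element subsets `S` of `E` (given by injective
`M`-tuples of elements of `E`); the exponent is the real number `(M.choose (N+1))⁻¹`. -/
noncomputable def mDiameter {K : Type*} [NormedField K] {N : ℕ}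
    (E : Set (Fin (N + 1) → K)) (M : ℕ) : ℝ :=
  sSup {r : ℝ | ∃ s : Fin M → (Fin (N + 1) → K),
    Function.Injective s ∧ (∀ i, s i ∈ E) ∧
      r = absVandermonde s ^ ((M.choose (N + 1) : ℝ)⁻¹)}

open Finset

open scoped Classical in
theorem card_filter_strictMono (k n : ℕ) :
    #{t : Fin k → Fin n | StrictMono t} = n.choose k := by
  let e : {t : Fin k → Fin n // StrictMono t} ≃ (Fin k ↪o Fin n) :=
    { toFun t := OrderEmbedding.ofStrictMono t.1 t.2
      invFun f := ⟨f, f.strictMono⟩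
      left_inv _ := rfl
      right_inv _ := rfl }
  rw [← Fintype.card_subtype, ← Nat.card_eq_fintype_card,
    Nat.card_congr (e.trans Set.powersetCard.ofFinEmbEquiv), Set.powersetCard.card, Nat.card_fin]

theorem Matrix.det_of_linearMap_apply {R ι : Type*} [CommRing R] [Fintype ι] [DecidableEq ι]
    (f : (ι → R) →ₗ[R] ι → R) (v : ι → ι → R) :
    (Matrix.of fun i j => f (v j) i).det = LinearMap.det f * (Matrix.of fun i j => v j i).det := by
  have hcols (w : ι → ι → R) : (Matrix.of fun i j => w j i).det = (Pi.basisFun R ι).det w := by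
    rw [Pi.basisFun_det_apply, ← det_transpose]
    rfl
  rw [hcols, hcols]
  exact (Pi.basisFun R ι).det_comp f v

section Vandermonde

variable {K : Type*} [NormedField K] {N M : ℕ}

theorem absVandermonde_nonneg (s : Fin M → Fin (N + 1) → K) : 0 ≤ absVandermonde s :=
  prod_nonneg fun _ _ => norm_nonneg _

theorem absVandermonde_linearMap_comp (f : (Fin (N + 1) → K) →ₗ[K] Fin (N + 1) → K)
    (s : Fin M → Fin (N + 1) → K) :
    absVandermonde (fun i => f (s i))
      = ‖LinearMap.det f‖ ^ M.choose (N + 1) * absVandermonde s := by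
  classical
  simp only [absVandermonde, Matrix.det_of_linearMap_apply, norm_mul, prod_mul_distrib,
    prod_const, card_filter_strictMono]

theorem mDiameter_image_linearEquiv (E : Set (Fin (N + 1) → K))
    (Γ : (Fin (N + 1) → K) ≃ₗ[K] Fin (N + 1) → K) (hM : N + 1 ≤ M) :
    mDiameter ((fun x => Γ x) '' E) M = ‖LinearMap.det Γ.toLinearMap‖ * mDiameter E M := by
  set c := ‖LinearMap.det Γ.toLinearMap‖
  have hc : 0 ≤ c := norm_nonneg _
  have hroot (s : Fin M → Fin (N + 1) → K) :
      absVandermonde (fun i => Γ (s i)) ^ ((M.choose (N + 1) : ℝ)⁻¹)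
        = c * absVandermonde s ^ ((M.choose (N + 1) : ℝ)⁻¹) := by
    rw [show (fun i => Γ (s i)) = fun i => Γ.toLinearMap (s i) from rfl,
      absVandermonde_linearMap_comp, Real.mul_rpow (by positivity) (absVandermonde_nonneg s),
      Real.pow_rpow_inv_natCast hc (Nat.choose_pos hM).ne']
  unfold mDiameter
  rw [← smul_eq_mul, ← Real.sSup_smul_of_nonneg hc]
  congr 1
  ext r
  simp only [Set.mem_smul_set, Set.mem_ofPred_eq, smul_eq_mul]
  constructor
  · rintro ⟨s, hinj, hmem, rfl⟩
    have hs : s = fun i => Γ (Γ.symm (s i)) := funext fun i => (Γ.apply_symm_apply _).symm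
    refine ⟨_, ⟨fun i => Γ.symm (s i), Γ.symm.injective.comp hinj, fun i => ?_, rfl⟩, ?_⟩
    · obtain ⟨x, hx, hxs⟩ := hmem i
      simpa [← hxs] using hx
    · rw [← hroot, ← hs]
  · rintro ⟨_, ⟨s, hinj, hmem, rfl⟩, rfl⟩
    exact ⟨fun i => Γ (s i), Γ.injective.comp hinj, fun i => ⟨s i, hmem i, rfl⟩, (hroot s).symm⟩

end Vandermonde

theorem stmt_15_general {K : Type*} [NormedField K] {N : ℕ}
    (E : Set (Fin (N + 1) → K))
    (Γ : (Fin (N + 1) → K) ≃ₗ[K] (Fin (N + 1) → K))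
    (L : ℝ)
    (hL : Filter.Tendsto (fun M => mDiameter E M) Filter.atTop (nhds L)) :
    Filter.Tendsto (fun M => mDiameter ((fun x => Γ x) '' E) M) Filter.atTop
      (nhds (‖LinearMap.det Γ.toLinearMap‖ * L)) := by
  refine (hL.const_mul _).congr' ?_
  filter_upwards [Filter.eventually_ge_atTop (N + 1)] with M hM
  exact (mDiameter_image_linearEquiv E Γ hM).symm

/-- For an infinite bounded subset `E` of `K^{N+1}` over a non-archimedean field `K` and
`Γ ∈ GL_{N+1}(K)`, the homogeneous transfinite diameter satisfies
`d_∞(Γ(E)) = |det Γ| · d_∞(E)`: if `d_M(E) → L`, then `d_M(Γ(E)) → ‖det Γ‖ * L`. -/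
theorem stmt_15 {K : Type*} [NormedField K] [IsUltrametricDist K] {N : ℕ}
    (E : Set (Fin (N + 1) → K)) (hE : E.Infinite)
    (hbdd : ∃ B : ℝ, ∀ x ∈ E, ‖x‖ ≤ B)
    (Γ : (Fin (N + 1) → K) ≃ₗ[K] (Fin (N + 1) → K))
    (L : ℝ)
    (hL : Filter.Tendsto (fun M => mDiameter E M) Filter.atTop (nhds L)) :
    Filter.Tendsto (fun M => mDiameter ((fun x => Γ x) '' E) M) Filter.atTop
      (nhds (‖LinearMap.det Γ.toLinearMap‖ * L)) :=
  stmt_15_general E Γ L hL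
end
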